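/- arXiv:1204.2623 — 2 statements merged into one kernel-verified Lean document; each statement's English description precedes it below -/
import Mathlib

section
/- If 1 ≤ r ≤ p ≤ ∞ and 1/p + 1/q = 1/r, then l_p^{l_r} = l_q (with equivalent norms); if 1 ≤ p < r ≤ ∞, then l_p^{l_r} = l_∞. -/
open Filter Topology
open scoped ENNReal

namespace Paper

/-- Coordinatewise product of two sequences. -/
def pmul (x y : ℕ → ℝ) : ℕ → ℝ := fun n => x n * y n

/-- Membership in `c₀`: the sequence converges to zero. -/
def MemC0 (x : ℕ → ℝ) : Prop := Tendsto x atTop (nhds 0)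

/-- A symmetric sequence space: a solid, rearrangement-invariant Banach
subspace of `c₀`, normalized so that `‖e₁‖ = 1`.  The norm function is
defined (as a real-valued function) on all sequences; the axioms concern
its behaviour on the carrier. -/
structure SymmSeqSpace where
  carrier : Set (ℕ → ℝ)
  nrm : (ℕ → ℝ) → ℝ
  mem_c0 : ∀ x ∈ carrier, MemC0 x
  zero_mem : (0 : ℕ → ℝ) ∈ carrier
  add_mem : ∀ x ∈ carrier, ∀ y ∈ carrier, x + y ∈ carrier
  smul_mem : ∀ (c : ℝ), ∀ x ∈ carrier, (c • x) ∈ carrier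
  nrm_nonneg : ∀ x, 0 ≤ nrm x
  nrm_eq_zero_iff : ∀ x ∈ carrier, (nrm x = 0 ↔ x = 0)
  nrm_add : ∀ x ∈ carrier, ∀ y ∈ carrier, nrm (x + y) ≤ nrm x + nrm y
  nrm_smul : ∀ (c : ℝ) (x : ℕ → ℝ), nrm (c • x) = |c| * nrm x
  solid : ∀ x y : ℕ → ℝ, (∀ n, |x n| ≤ |y n|) → y ∈ carrier →
      x ∈ carrier ∧ nrm x ≤ nrm y
  symm : ∀ (σ : Equiv.Perm ℕ), ∀ x ∈ carrier,
      (x ∘ σ) ∈ carrier ∧ nrm (x ∘ σ) = nrm x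
  complete : ∀ u : ℕ → (ℕ → ℝ), (∀ n, u n ∈ carrier) →
      (∀ ε : ℝ, 0 < ε → ∃ N, ∀ m ≥ N, ∀ k ≥ N, nrm (u m - u k) < ε) →
      ∃ x ∈ carrier, Tendsto (fun n => nrm (u n - x)) atTop (nhds 0)
  nrm_unit : nrm (fun n => if n = 0 then (1 : ℝ) else 0) = 1

/-- The `ℓ_p` norm of a sequence, `1 ≤ p ≤ ∞`. -/
noncomputable def lpNrm (p : ℝ≥0∞) (x : ℕ → ℝ) : ℝ :=
  if p = ∞ then ⨆ n, |x n| else (∑' n, |x n| ^ p.toReal) ^ (1 / p.toReal)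

/-- Membership in `ℓ_p`. -/
def MemLp (p : ℝ≥0∞) (x : ℕ → ℝ) : Prop :=
  if p = ∞ then BddAbove (Set.range fun n => |x n|)
  else Summable fun n => |x n| ^ p.toReal

/-- The set `ℓ_p`. -/
def lpSet (p : ℝ≥0∞) : Set (ℕ → ℝ) := {x | MemLp p x}

/-- `(∑_k |x_k|^p)^{1/p}` computed coordinatewise (with the sup for `p = ∞`). -/
noncomputable def pSum (p : ℝ≥0∞) {n : ℕ} (x : Fin n → ℕ → ℝ) : ℕ → ℝ :=
  if p = ∞ then fun m => ⨆ k, |x k m|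
  else fun m => (∑ k, |x k m| ^ p.toReal) ^ (1 / p.toReal)

/-- `(∑_k ‖x_k‖_E^p)^{1/p}` (with the sup for `p = ∞`). -/
noncomputable def pNrmSum (E : SymmSeqSpace) (p : ℝ≥0∞) {n : ℕ}
    (x : Fin n → ℕ → ℝ) : ℝ :=
  if p = ∞ then ⨆ k, E.nrm (x k)
  else (∑ k, E.nrm (x k) ^ p.toReal) ^ (1 / p.toReal)

/-- `E` is `p`-convex with constant `C`. -/
def IsPConvex (E : SymmSeqSpace) (p : ℝ≥0∞) (C : ℝ) : Prop :=
  ∀ (n : ℕ) (x : Fin n → ℕ → ℝ), (∀ k, x k ∈ E.carrier) →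
    pSum p x ∈ E.carrier ∧ E.nrm (pSum p x) ≤ C * pNrmSum E p x

/-- `E` is `q`-concave with constant `C`. -/
def IsQConcave (E : SymmSeqSpace) (q : ℝ≥0∞) (C : ℝ) : Prop :=
  ∀ (n : ℕ) (x : Fin n → ℕ → ℝ), (∀ k, x k ∈ E.carrier) →
    pNrmSum E q x ≤ C * E.nrm (pSum q x)

/-- The Köthe dual of a set of sequences. -/
def kDual (E : Set (ℕ → ℝ)) : Set (ℕ → ℝ) :=
  {y | BddAbove (Set.range fun n => |y n|) ∧
    ∀ x ∈ E, Summable fun n => |x n * y n|}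

/-- The Köthe dual norm. -/
noncomputable def kDualNrm (E : Set (ℕ → ℝ)) (eN : (ℕ → ℝ) → ℝ)
    (y : ℕ → ℝ) : ℝ :=
  sSup {c | ∃ x ∈ E, eN x ≤ 1 ∧ c = ∑' n, |x n * y n|}

/-- The space `E^F` of coordinatewise multipliers from `E` into `F`. -/
def mulSet (E F : Set (ℕ → ℝ)) : Set (ℕ → ℝ) :=
  {x | ∀ y ∈ E, pmul x y ∈ F}

/-- The multiplier norm on `E^F`. -/
noncomputable def mulNrm (E : Set (ℕ → ℝ)) (eN fN : (ℕ → ℝ) → ℝ)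
    (x : ℕ → ℝ) : ℝ :=
  sSup {c | ∃ y ∈ E, eN y ≤ 1 ∧ c = fN (pmul x y)}

/-- The `p`-convexification `E^p = {x : |x|^p ∈ E}` of a set of sequences. -/
def convexif (E : Set (ℕ → ℝ)) (p : ℝ) : Set (ℕ → ℝ) :=
  {x | (fun n => |x n| ^ p) ∈ E}

/-- The norm of the `p`-convexification. -/
noncomputable def convexifNrm (eN : (ℕ → ℝ) → ℝ) (p : ℝ) (x : ℕ → ℝ) : ℝ :=
  (eN fun n => |x n| ^ p) ^ (1 / p)

/-- A matrix acting on a sequence: `(Ax)_i = ∑_j a_{ij} x_j`. -/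
noncomputable def matApply (A : ℕ → ℕ → ℝ) (x : ℕ → ℝ) : ℕ → ℝ :=
  fun i => ∑' j, A i j * x j

/-- The matrix `A` maps `Ec` into `Fc` (with absolutely convergent rows). -/
def MatMaps (A : ℕ → ℕ → ℝ) (Ec Fc : Set (ℕ → ℝ)) : Prop :=
  ∀ x ∈ Ec, (∀ i, Summable fun j => A i j * x j) ∧ matApply A x ∈ Fc

/-- `A` is a bounded operator from `(Ec, eN)` to `(Fc, fN)`. -/
def IsBddOp (A : ℕ → ℕ → ℝ) (Ec Fc : Set (ℕ → ℝ))
    (eN fN : (ℕ → ℝ) → ℝ) : Prop :=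
  MatMaps A Ec Fc ∧ ∃ C : ℝ, ∀ x ∈ Ec, fN (matApply A x) ≤ C * eN x

/-- The operator norm of a matrix from `(Ec, eN)` to `fN`. -/
noncomputable def opNrm (A : ℕ → ℕ → ℝ) (Ec : Set (ℕ → ℝ))
    (eN fN : (ℕ → ℝ) → ℝ) : ℝ :=
  sSup {c | ∃ x ∈ Ec, eN x ≤ 1 ∧ c = fN (matApply A x)}

/-- The transposed matrix. -/
def transpose (A : ℕ → ℕ → ℝ) : ℕ → ℕ → ℝ := fun i j => A j i

/-- The Schur (entrywise) product of two matrices. -/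
def schur (M A : ℕ → ℕ → ℝ) : ℕ → ℕ → ℝ := fun i j => M i j * A i j

/-- `M` is a Schur multiplier from `B((Ec,eN),(Fc,fN))` to itself. -/
def IsMultiplier (M : ℕ → ℕ → ℝ) (Ec Fc : Set (ℕ → ℝ))
    (eN fN : (ℕ → ℝ) → ℝ) : Prop :=
  ∀ A : ℕ → ℕ → ℝ, IsBddOp A Ec Fc eN fN → IsBddOp (schur M A) Ec Fc eN fN

/-- The Schur multiplier norm. -/
noncomputable def multNrm (M : ℕ → ℕ → ℝ) (Ec Fc : Set (ℕ → ℝ))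
    (eN fN : (ℕ → ℝ) → ℝ) : ℝ :=
  sSup {c | ∃ A : ℕ → ℕ → ℝ, IsBddOp A Ec Fc eN fN ∧
    opNrm A Ec eN fN ≤ 1 ∧ c = opNrm (schur M A) Ec eN fN}

/-- The norm of `F` is a Fatou norm. -/
def HasFatouNorm (F : SymmSeqSpace) : Prop :=
  ∀ x ∈ F.carrier, ∀ u : ℕ → (ℕ → ℝ), (∀ n, u n ∈ F.carrier) →
    (∀ n m, 0 ≤ u n m) → (∀ n m, u n m ≤ u (n + 1) m) →
    (∀ m, Tendsto (fun n => u n m) atTop (nhds (x m))) →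
    Tendsto (fun n => F.nrm (u n)) atTop (nhds (F.nrm x))

end Paper

/-!
Hölder's inequality `‖x y‖_r ≤ ‖x‖_q ‖y‖_p` gives `ℓ_q ⊆ ℓ_p^{ℓ_r}` with multiplier norm at
most `‖x‖_q`, and the multiplier norm is exactly `‖x‖_q`: for `p, q < ∞` it is attained at
`y = |x|^{q/p} / ‖x‖_q^{q/p}`, for `p = ∞` at `y = 1`, and for `q = ∞` it is approached along unit
vectors.

Conversely, if `∑ |x_n|^q = ∞`, put `a_n = |x_n|^q`, `B_n = 1 + a_0 + ⋯ + a_n` and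
`y_n = |x_n|^{q/p} B_n^{-α}` with `1/p < α < 1/r`. Then `|y_n|^p = a_n / B_n^{αp}` and
`|x_n y_n|^r = a_n / B_n^{αr}`, and by the Abel–Dini theorem `∑ a_n / B_n^s` converges exactly for
`s > 1`; so `y ∈ ℓ_p` but `x y ∉ ℓ_r`. An unbounded `x` is never a multiplier: take `y = 2^{-k}` on
a subsequence where `|x| ≥ 4^k`. This settles `q = ∞`, and also `p < r`, where conversely
`ℓ_∞ · ℓ_p ⊆ ℓ_p ⊆ ℓ_r`.
-/

namespace Paper

lemma one_add_mul_one_sub_le_rpow_neg {t δ : ℝ} (ht : 0 < t) (hδ : 0 ≤ δ) :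
    1 + δ * (1 - t) ≤ t ^ (-δ) := by
  rw [Real.rpow_def_of_pos ht]
  nlinarith [Real.add_one_le_exp (Real.log t * -δ), Real.log_le_sub_one_of_pos ht]

lemma sub_div_rpow_one_add_le {u v δ : ℝ} (hu : 0 < u) (hv : 0 < v) (hδ : 0 < δ) :
    (v - u) / v ^ (1 + δ) ≤ (u ^ (-δ) - v ^ (-δ)) / δ := by
  obtain ⟨t, ht, rfl⟩ : ∃ t, 0 < t ∧ u = v * t := ⟨u / v, div_pos hu hv, by field_simp⟩
  have hvδ : 0 < v ^ δ := Real.rpow_pos_of_pos hv δ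
  calc (v - v * t) / v ^ (1 + δ) = δ * (1 - t) * (v ^ δ)⁻¹ / δ := by
        rw [Real.rpow_one_add' hv.le (by positivity)]; field_simp
    _ ≤ (t ^ (-δ) - 1) * (v ^ δ)⁻¹ / δ := by
        gcongr; linarith [one_add_mul_one_sub_le_rpow_neg ht hδ.le]
    _ = ((v * t) ^ (-δ) - v ^ (-δ)) / δ := by
        rw [Real.mul_rpow hv.le ht.le, Real.rpow_neg hv.le]; ring

section AbelDini

variable {a : ℕ → ℝ}

lemma summable_div_one_add_sum_range_rpow (ha : ∀ n, 0 ≤ a n) {s : ℝ} (hs : 1 < s) :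
    Summable fun n => a n / (1 + ∑ i ∈ Finset.range (n + 1), a i) ^ s := by
  set b : ℕ → ℝ := fun n => 1 + ∑ i ∈ Finset.range n, a i
  have hb : ∀ n, 1 ≤ b n := fun n => le_add_of_nonneg_right (Finset.sum_nonneg fun i _ => ha i)
  have hb_succ : ∀ n, b (n + 1) = b n + a n := fun n => by
    simp only [b, Finset.sum_range_succ]; ring
  obtain ⟨δ, hδ, rfl⟩ : ∃ δ, 0 < δ ∧ s = 1 + δ := ⟨s - 1, by linarith, by ring⟩
  have hterm : ∀ n, a n / b (n + 1) ^ (1 + δ) ≤ (b n ^ (-δ) - b (n + 1) ^ (-δ)) / δ := by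
    intro n
    have := sub_div_rpow_one_add_le (zero_lt_one.trans_le (hb n))
      (zero_lt_one.trans_le (hb (n + 1))) hδ
    simpa only [hb_succ, add_sub_cancel_left] using this
  refine summable_of_sum_range_le (c := 1 / δ)
    (fun n => div_nonneg (ha n) (by have := hb (n + 1); positivity)) fun N => ?_
  calc ∑ n ∈ Finset.range N, a n / b (n + 1) ^ (1 + δ)
      ≤ ∑ n ∈ Finset.range N, (b n ^ (-δ) - b (n + 1) ^ (-δ)) / δ :=
        Finset.sum_le_sum fun n _ => hterm n
    _ = (b 0 ^ (-δ) - b N ^ (-δ)) / δ := by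
        rw [← Finset.sum_div, Finset.sum_range_sub' (fun n => b n ^ (-δ))]
    _ ≤ 1 / δ := by
        have hb0 : b 0 = 1 := by simp [b]
        have : 0 ≤ b N ^ (-δ) := by have := hb N; positivity
        rw [hb0, Real.one_rpow]
        gcongr
        linarith

lemma not_summable_div_one_add_sum_range_rpow (ha : ∀ n, 0 ≤ a n) (hna : ¬ Summable a)
    {s : ℝ} (hs : s ≤ 1) :
    ¬ Summable fun n => a n / (1 + ∑ i ∈ Finset.range (n + 1), a i) ^ s := by
  set b : ℕ → ℝ := fun n => 1 + ∑ i ∈ Finset.range n, a i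
  have hb : ∀ n, 1 ≤ b n := fun n => le_add_of_nonneg_right (Finset.sum_nonneg fun i _ => ha i)
  have hb_pos : ∀ n, 0 < b n := fun n => zero_lt_one.trans_le (hb n)
  have hb_mono : Monotone b := fun m n hmn => add_le_add_right
    (Finset.sum_le_sum_of_subset_of_nonneg (Finset.range_subset_range.2 hmn)
      fun i _ _ => ha i) 1
  intro hsum
  have hsum' : Summable fun n => a n / b (n + 1) :=
    hsum.of_nonneg_of_le (fun n => div_nonneg (ha n) (hb_pos _).le) fun n =>
      div_le_div_of_nonneg_left (ha n) (Real.rpow_pos_of_pos (hb_pos _) _)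
        (by simpa using Real.rpow_le_rpow_of_exponent_le (hb (n + 1)) hs)
  obtain ⟨N, hN⟩ := Metric.cauchySeq_iff'.1
    hsum'.hasSum.tendsto_sum_nat.cauchySeq (1 / 2) (by norm_num)
  have hb_top : Tendsto b atTop atTop :=
    tendsto_atTop_add_const_left _ 1 ((not_summable_iff_tendsto_nat_atTop_of_nonneg ha).1 hna)
  obtain ⟨M, hNM, hM⟩ := ((eventually_ge_atTop N).and
    (hb_top.eventually_ge_atTop (2 * b N))).exists
  -- the block `N ≤ n < M` of the series is at least `(b M - b N) / b M ≥ 1 / 2`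
  have hblock : (b M - b N) / b M ≤ ∑ n ∈ Finset.Ico N M, a n / b (n + 1) := by
    have : b M - b N = ∑ n ∈ Finset.Ico N M, a n := by
      simp only [b, Finset.sum_Ico_eq_sub _ hNM]; ring
    rw [this, Finset.sum_div]
    refine Finset.sum_le_sum fun n hn => div_le_div_of_nonneg_left (ha n) (hb_pos _) ?_
    exact hb_mono (Finset.mem_Ico.1 hn).2
  have := hN M hNM
  rw [Real.dist_eq, ← Finset.sum_Ico_eq_sub _ hNM, abs_of_nonneg
    (Finset.sum_nonneg fun n _ => div_nonneg (ha n) (hb_pos _).le)] at this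
  have : 1 / 2 ≤ (b M - b N) / b M := by
    rw [le_div_iff₀ (hb_pos M)]; linarith
  linarith

end AbelDini

section RealExponents

variable {P Q R : ℝ}

lemma abs_rpow_mul_rpow (hP : 0 < P) (s : ℝ) {c : ℝ} (hc : 0 ≤ c) :
    |(|s| ^ (Q / P) * c)| ^ P = |s| ^ Q * c ^ P := by
  rw [abs_of_nonneg (by positivity), Real.mul_rpow (by positivity) hc,
    ← Real.rpow_mul (abs_nonneg s), div_mul_cancel₀ _ hP.ne']

lemma abs_mul_rpow_mul_rpow (h : Q.HolderTriple P R) (s : ℝ) {c : ℝ} (hc : 0 ≤ c) :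
    |s * (|s| ^ (Q / P) * c)| ^ R = |s| ^ Q * c ^ R := by
  have hQ := h.pos
  have hP := h.symm.pos
  have hR := h.pos'
  have hexp : (1 + Q / P) * R = Q := by
    have := h.one_div_add_one_div
    field_simp at this ⊢
    linarith
  rw [abs_mul, abs_of_nonneg (by positivity : 0 ≤ |s| ^ (Q / P) * c), ← mul_assoc,
    ← Real.rpow_one_add' (abs_nonneg s) (by positivity), Real.mul_rpow (by positivity) hc,
    ← Real.rpow_mul (abs_nonneg s), hexp]

lemma exists_norming_seq (h : Q.HolderTriple P R) {x : ℕ → ℝ}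
    (hx : Summable fun n => |x n| ^ Q) :
    ∃ y : ℕ → ℝ, Summable (fun n => |y n| ^ P) ∧ ∑' n, |y n| ^ P ≤ 1 ∧
      (∑' n, |x n * y n| ^ R) ^ (1 / R) = (∑' n, |x n| ^ Q) ^ (1 / Q) := by
  have hQ := h.pos
  have hP := h.symm.pos
  have hR := h.pos'
  set T := ∑' n, |x n| ^ Q
  have hT : 0 ≤ T := tsum_nonneg fun n => by positivity
  set c := T ^ (-1 / P)
  have hc : 0 ≤ c := by positivity
  refine ⟨fun n => |x n| ^ (Q / P) * c, ?_, ?_, ?_⟩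
  · simpa only [abs_rpow_mul_rpow hP _ hc] using hx.mul_right _
  · rw [tsum_congr fun n => abs_rpow_mul_rpow hP (x n) hc, tsum_mul_right,
      ← Real.rpow_mul hT, div_mul_cancel₀ _ hP.ne', Real.rpow_neg_one]
    exact mul_inv_le_one
  · have hRQ : 1 + -1 / P * R = R / Q := by
      have := h.one_div_add_one_div
      field_simp at this ⊢
      linarith
    rw [tsum_congr fun n => abs_mul_rpow_mul_rpow h (x n) hc, tsum_mul_right,
      ← Real.rpow_mul hT, ← Real.rpow_one_add' hT (by rw [hRQ]; positivity), hRQ,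
      ← Real.rpow_mul hT]
    congr 1
    field_simp

lemma exists_summable_not_summable_mul (h : Q.HolderTriple P R) {x : ℕ → ℝ}
    (hx : ¬ Summable fun n => |x n| ^ Q) :
    ∃ y : ℕ → ℝ, Summable (fun n => |y n| ^ P) ∧ ¬ Summable fun n => |x n * y n| ^ R := by
  have hP := h.symm.pos
  have hR := h.pos'
  have hPR : P⁻¹ < R⁻¹ := h.symm.inv_lt_inv
  set a : ℕ → ℝ := fun n => |x n| ^ Q
  have ha : ∀ n, 0 ≤ a n := fun n => by positivity
  set B : ℕ → ℝ := fun n => 1 + ∑ i ∈ Finset.range (n + 1), a i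
  have hB : ∀ n, 0 ≤ B n := fun n => by
    have := Finset.sum_nonneg fun i (_ : i ∈ Finset.range (n + 1)) => ha i
    positivity
  -- any exponent strictly between `1 / P` and `1 / R` works
  set α := (P⁻¹ + R⁻¹) / 2
  have hc : ∀ n E, (B n ^ (-α)) ^ E = (B n ^ (α * E))⁻¹ := fun n E => by
    rw [← Real.rpow_mul (hB n), neg_mul, Real.rpow_neg (hB n)]
  refine ⟨fun n => |x n| ^ (Q / P) * B n ^ (-α), ?_, ?_⟩
  · simp only [abs_rpow_mul_rpow hP _ (Real.rpow_nonneg (hB _) _), hc, ← div_eq_mul_inv]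
    refine summable_div_one_add_sum_range_rpow ha ?_
    exact (inv_lt_iff_one_lt_mul₀ hP).1 (show P⁻¹ < (P⁻¹ + R⁻¹) / 2 by linarith)
  · simp only [abs_mul_rpow_mul_rpow h _ (Real.rpow_nonneg (hB _) _), hc, ← div_eq_mul_inv]
    refine not_summable_div_one_add_sum_range_rpow ha hx ?_
    have := mul_lt_mul_of_pos_right (show (P⁻¹ + R⁻¹) / 2 < R⁻¹ by linarith) hR
    rw [inv_mul_cancel₀ hR.ne'] at this
    exact this.le

end RealExponents

lemma frequently_le_of_not_bddAbove {f : ℕ → ℝ} (hf : ¬ BddAbove (Set.range f)) (B : ℝ) :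
    ∃ᶠ n in atTop, B ≤ f n := by
  refine fun h => hf (isBoundedUnder_of_eventually_le (a := B) ?_).bddAbove_range
  filter_upwards [h] with n hn using (not_le.1 hn).le

lemma exists_memℓp_one_not_bddAbove_mul {x : ℕ → ℝ}
    (hx : ¬ BddAbove (Set.range fun n => |x n|)) :
    ∃ y : ℕ → ℝ, Memℓp y 1 ∧ ¬ BddAbove (Set.range fun n => |x n * y n|) := by
  -- along a subsequence with `|x (φ k)| ≥ 4 ^ k`, put `y (φ k) = 2⁻¹ ^ k`
  obtain ⟨φ, hφ, hxφ⟩ := extraction_forall_of_frequently fun k =>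
    frequently_le_of_not_bddAbove hx ((4 : ℝ) ^ k)
  set y : ℕ → ℝ := Function.extend φ (fun k => (2 : ℝ)⁻¹ ^ k) 0
  have hyφ : ∀ k, y (φ k) = 2⁻¹ ^ k := hφ.injective.extend_apply _ _
  refine ⟨y, ?_, fun ⟨C, hC⟩ => ?_⟩
  · rw [memℓp_gen_iff (by simp)]
    refine (hφ.injective.summable_iff fun n hn => ?_).1 ?_
    · simp [y, Function.extend_apply' _ _ _ (by simpa using hn)]
    · simpa [Function.comp_def, hyφ] using summable_geometric_two
  obtain ⟨k, hk⟩ := pow_unbounded_of_one_lt C (by norm_num : (1 : ℝ) < 2)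
  have : (2 : ℝ) ^ k ≤ |x (φ k) * y (φ k)| := by
    rw [abs_mul, hyφ, abs_of_pos (a := (2 : ℝ)⁻¹ ^ k) (by positivity)]
    calc (2 : ℝ) ^ k = 4 ^ k * 2⁻¹ ^ k := by rw [← mul_pow]; norm_num
      _ ≤ |x (φ k)| * 2⁻¹ ^ k := by gcongr; exact hxφ k
  exact hk.not_ge (this.trans (hC ⟨φ k, rfl⟩))

lemma ne_zero_of_fact_one_le {s : ℝ≥0∞} [hs : Fact (1 ≤ s)] : s ≠ 0 :=
  (zero_lt_one.trans_le hs.out).ne'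

lemma mem_lpSet_iff {p : ℝ≥0∞} (hp : p ≠ 0) {x : ℕ → ℝ} : x ∈ lpSet p ↔ Memℓp x p := by
  rcases eq_or_ne p ∞ with rfl | hp'
  · simp [lpSet, MemLp, memℓp_infty_iff]
  · simp [lpSet, MemLp, hp', memℓp_gen_iff (ENNReal.toReal_pos hp hp')]

lemma mem_lpSet_iff_summable {p : ℝ≥0∞} (hp : p ≠ ∞) {x : ℕ → ℝ} :
    x ∈ lpSet p ↔ Summable fun n => |x n| ^ p.toReal := by
  simp [lpSet, MemLp, hp]

lemma lpNrm_coe {p : ℝ≥0∞} (hp : p ≠ 0) (x : lp (fun _ : ℕ => ℝ) p) : lpNrm p x = ‖x‖ := by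
  rcases eq_or_ne p ∞ with rfl | hp'
  · simp [lpNrm, lp.norm_eq_ciSup]
  · simp [lpNrm, hp', lp.norm_eq_tsum_rpow (ENNReal.toReal_pos hp hp')]

lemma lpNrm_of_ne_top {p : ℝ≥0∞} (hp : p ≠ ∞) (x : ℕ → ℝ) :
    lpNrm p x = (∑' n, |x n| ^ p.toReal) ^ (1 / p.toReal) := by
  simp [lpNrm, hp]

lemma lpNrm_nonneg (p : ℝ≥0∞) (x : ℕ → ℝ) : 0 ≤ lpNrm p x := by
  unfold lpNrm; split_ifs
  · exact Real.iSup_nonneg fun n => abs_nonneg _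
  · positivity

lemma single_mem_lpSet {p : ℝ≥0∞} (hp : p ≠ 0) (n : ℕ) (c : ℝ) :
    (Pi.single n c : ℕ → ℝ) ∈ lpSet p := by
  rw [mem_lpSet_iff hp]
  exact (lp.single (E := fun _ : ℕ => ℝ) p n c).2

lemma lpNrm_single {p : ℝ≥0∞} (hp : p ≠ 0) (n : ℕ) (c : ℝ) : lpNrm p (Pi.single n c) = |c| := by
  have := lpNrm_coe hp (lp.single (E := fun _ : ℕ => ℝ) p n c)
  rwa [lp.coeFn_single, lp.norm_single (pos_iff_ne_zero.2 hp), Real.norm_eq_abs] at this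

lemma one_mem_lpSet_top : (fun _ => (1 : ℝ)) ∈ lpSet ∞ := by
  rw [mem_lpSet_iff ENNReal.top_ne_zero]
  exact memℓp_infty_iff.2 ⟨1, by rintro _ ⟨n, rfl⟩; simp⟩

lemma lpNrm_top_one : lpNrm ∞ (fun _ => (1 : ℝ)) = 1 := by
  simp [lpNrm]

lemma pmul_one (x : ℕ → ℝ) : pmul x (fun _ => 1) = x :=
  funext fun n => mul_one (x n)

lemma pmul_single_one (x : ℕ → ℝ) (n : ℕ) : pmul x (Pi.single n 1) = Pi.single n (x n) := by
  ext m
  by_cases h : m = n <;> simp [pmul, h]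

section mulNrm

variable {E : Set (ℕ → ℝ)} {eN fN : (ℕ → ℝ) → ℝ} {x : ℕ → ℝ} {A : ℝ}

lemma le_mulNrm (hA : ∀ y ∈ E, eN y ≤ 1 → fN (pmul x y) ≤ A) {y : ℕ → ℝ} (hy : y ∈ E)
    (hy1 : eN y ≤ 1) : fN (pmul x y) ≤ mulNrm E eN fN x :=
  le_csSup ⟨A, by rintro c ⟨y, hy, hy1, rfl⟩; exact hA y hy hy1⟩ ⟨y, hy, hy1, rfl⟩

lemma mulNrm_le (hE : ∃ y ∈ E, eN y ≤ 1) (hA : ∀ y ∈ E, eN y ≤ 1 → fN (pmul x y) ≤ A) :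
    mulNrm E eN fN x ≤ A := by
  obtain ⟨y, hy, hy1⟩ := hE
  exact csSup_le ⟨_, y, hy, hy1, rfl⟩ (by rintro c ⟨y, hy, hy1, rfl⟩; exact hA y hy hy1)

end mulNrm

theorem pmul_mem_lpSet_and_lpNrm_le {p q r : ℝ≥0∞} [Fact (1 ≤ p)] [Fact (1 ≤ q)] [Fact (1 ≤ r)]
    [q.HolderTriple p r] {x y : ℕ → ℝ} (hx : x ∈ lpSet q) (hy : y ∈ lpSet p) :
    pmul x y ∈ lpSet r ∧ lpNrm r (pmul x y) ≤ lpNrm q x * lpNrm p y := by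
  let X : lp (fun _ : ℕ => ℝ) q := ⟨x, (mem_lpSet_iff ne_zero_of_fact_one_le).1 hx⟩
  let Y : lp (fun _ : ℕ => ℝ) p := ⟨y, (mem_lpSet_iff ne_zero_of_fact_one_le).1 hy⟩
  have hB : ∀ _ : ℕ, ‖ContinuousLinearMap.mul ℝ ℝ‖ ≤ (1 : NNReal) := fun _ => by simp
  let XY := lp.holderL r (fun _ => ContinuousLinearMap.mul ℝ ℝ) hB X Y
  have hXY : lpNrm r (pmul x y) = ‖XY‖ := lpNrm_coe ne_zero_of_fact_one_le XY
  have hX : lpNrm q x = ‖X‖ := lpNrm_coe ne_zero_of_fact_one_le X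
  have hY : lpNrm p y = ‖Y‖ := lpNrm_coe ne_zero_of_fact_one_le Y
  refine ⟨(mem_lpSet_iff ne_zero_of_fact_one_le).2 XY.2, ?_⟩
  rw [hXY, hX, hY]
  calc ‖XY‖ ≤ ‖lp.holderL r (fun _ => ContinuousLinearMap.mul ℝ ℝ) hB‖ * ‖X‖ * ‖Y‖ :=
        ContinuousLinearMap.le_opNorm₂ _ _ _
    _ ≤ 1 * ‖X‖ * ‖Y‖ := by gcongr; exact lp.norm_holderL_le _ _ _
    _ = ‖X‖ * ‖Y‖ := by rw [one_mul]

lemma exists_mem_lpSet_pmul_not_mem {p r : ℝ≥0∞} (hp : 1 ≤ p) (hr : r ≠ 0) {x : ℕ → ℝ}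
    (hx : x ∉ lpSet ∞) : ∃ y ∈ lpSet p, pmul x y ∉ lpSet r := by
  rw [mem_lpSet_iff ENNReal.top_ne_zero, memℓp_infty_iff] at hx
  obtain ⟨y, hy, hxy⟩ := exists_memℓp_one_not_bddAbove_mul (by simpa using hx)
  refine ⟨y, (mem_lpSet_iff (zero_lt_one.trans_le hp).ne').2 (hy.of_exponent_ge hp),
    fun h => hxy ?_⟩
  simpa [memℓp_infty_iff, pmul] using ((mem_lpSet_iff hr).1 h).of_exponent_ge le_top

section Holder

variable {p q r : ℝ≥0∞} [Fact (1 ≤ p)] [Fact (1 ≤ q)] [Fact (1 ≤ r)] [q.HolderTriple p r]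
  {x : ℕ → ℝ}

lemma lpNrm_pmul_le (hx : x ∈ lpSet q) {y : ℕ → ℝ} (hy : y ∈ lpSet p) (hy1 : lpNrm p y ≤ 1) :
    lpNrm r (pmul x y) ≤ lpNrm q x :=
  (pmul_mem_lpSet_and_lpNrm_le hx hy).2.trans
    (mul_le_of_le_one_right (lpNrm_nonneg q x) hy1)

lemma mulNrm_le_lpNrm (hx : x ∈ lpSet q) :
    mulNrm (lpSet p) (lpNrm p) (lpNrm r) x ≤ lpNrm q x :=
  mulNrm_le ⟨_, single_mem_lpSet ne_zero_of_fact_one_le 0 1,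
    by simp [lpNrm_single ne_zero_of_fact_one_le]⟩ fun _ hy hy1 => lpNrm_pmul_le hx hy hy1

lemma lpNrm_le_mulNrm (hx : x ∈ lpSet q) :
    lpNrm q x ≤ mulNrm (lpSet p) (lpNrm p) (lpNrm r) x := by
  have hA : ∀ y ∈ lpSet p, lpNrm p y ≤ 1 → lpNrm r (pmul x y) ≤ lpNrm q x :=
    fun _ hy hy1 => lpNrm_pmul_le hx hy hy1
  rcases eq_or_ne q ∞ with rfl | hq
  · simp only [lpNrm, if_true]
    refine ciSup_le fun n => ?_
    have := le_mulNrm hA (single_mem_lpSet ne_zero_of_fact_one_le n 1)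
      (by simp [lpNrm_single ne_zero_of_fact_one_le])
    rwa [pmul_single_one, lpNrm_single ne_zero_of_fact_one_le] at this
  rcases eq_or_ne p ∞ with rfl | hp
  · obtain rfl : r = q := ENNReal.HolderTriple.unique q ∞ r q
    simpa only [pmul_one] using le_mulNrm hA one_mem_lpSet_top lpNrm_top_one.le
  have hr : r ≠ ∞ := ne_top_of_le_ne_top hq (ENNReal.HolderTriple.le q p r)
  obtain ⟨y, hy, hy1, hxy⟩ := exists_norming_seq
    (ENNReal.HolderTriple.toReal r (ENNReal.toReal_pos ne_zero_of_fact_one_le hq)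
      (ENNReal.toReal_pos ne_zero_of_fact_one_le hp)) ((mem_lpSet_iff_summable hq).1 hx)
  rw [lpNrm_of_ne_top hq, ← hxy, ← lpNrm_of_ne_top hr]
  refine le_mulNrm hA ((mem_lpSet_iff_summable hp).2 hy) ?_
  rw [lpNrm_of_ne_top hp]
  exact Real.rpow_le_one (tsum_nonneg fun n => by positivity) hy1 (by positivity)

theorem mulSet_lpSet_eq : mulSet (lpSet p) (lpSet r) = lpSet q := by
  refine Set.Subset.antisymm (fun x hx => ?_) fun x hx y hy =>
    (pmul_mem_lpSet_and_lpNrm_le hx hy).1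
  rcases eq_or_ne q ∞ with rfl | hq
  · by_contra hx'
    obtain ⟨y, hy, hxy⟩ :=
      exists_mem_lpSet_pmul_not_mem (p := p) (r := r) Fact.out ne_zero_of_fact_one_le hx'
    exact hxy (hx y hy)
  rcases eq_or_ne p ∞ with rfl | hp
  · obtain rfl : r = q := ENNReal.HolderTriple.unique q ∞ r q
    simpa only [pmul_one] using hx _ one_mem_lpSet_top
  have hr : r ≠ ∞ := ne_top_of_le_ne_top hq (ENNReal.HolderTriple.le q p r)
  by_contra hx'
  obtain ⟨y, hy, hxy⟩ := exists_summable_not_summable_mul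
    (ENNReal.HolderTriple.toReal r (ENNReal.toReal_pos ne_zero_of_fact_one_le hq)
      (ENNReal.toReal_pos ne_zero_of_fact_one_le hp)) (by rwa [mem_lpSet_iff_summable hq] at hx')
  exact hxy ((mem_lpSet_iff_summable hr).1 (hx y ((mem_lpSet_iff_summable hp).2 hy)))

end Holder

theorem mulSet_lpSet_eq_lpSet_top {p r : ℝ≥0∞} (hp : 1 ≤ p) (hpr : p ≤ r) :
    mulSet (lpSet p) (lpSet r) = lpSet ∞ := by
  have : Fact (1 ≤ p) := ⟨hp⟩
  have hr : r ≠ 0 := (zero_lt_one.trans_le (hp.trans hpr)).ne'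
  refine Set.Subset.antisymm (fun x hx => ?_) fun x hx y hy => ?_
  · by_contra hx'
    obtain ⟨y, hy, hxy⟩ := exists_mem_lpSet_pmul_not_mem hp hr hx'
    exact hxy (hx y hy)
  · have hxy := (pmul_mem_lpSet_and_lpNrm_le (r := p) hx hy).1
    exact (mem_lpSet_iff hr).2 (((mem_lpSet_iff ne_zero_of_fact_one_le).1 hxy).of_exponent_ge hpr)

end Paper

/-- If `1 ≤ r ≤ p ≤ ∞` and `1/p + 1/q = 1/r`, then `ℓ_p^{ℓ_r} = ℓ_q` with
equivalent norms; if `1 ≤ p < r ≤ ∞`, then `ℓ_p^{ℓ_r} = ℓ_∞`. -/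
theorem stmt6 :
    (∀ p q r : ℝ≥0∞, 1 ≤ r → r ≤ p → p⁻¹ + q⁻¹ = r⁻¹ →
      Paper.mulSet (Paper.lpSet p) (Paper.lpSet r) = Paper.lpSet q ∧
      ∃ c C : ℝ, 0 < c ∧ 0 < C ∧ ∀ x ∈ Paper.lpSet q,
        c * Paper.lpNrm q x ≤
            Paper.mulNrm (Paper.lpSet p) (Paper.lpNrm p) (Paper.lpNrm r) x ∧
        Paper.mulNrm (Paper.lpSet p) (Paper.lpNrm p) (Paper.lpNrm r) x ≤
            C * Paper.lpNrm q x) ∧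
    (∀ p r : ℝ≥0∞, 1 ≤ p → p < r →
      Paper.mulSet (Paper.lpSet p) (Paper.lpSet r) = Paper.lpSet ∞) := by
  refine ⟨fun p q r hr _ hpqr => ?_, fun p r hp hpr => Paper.mulSet_lpSet_eq_lpSet_top hp hpr.le⟩
  have : p.HolderTriple q r := ⟨hpqr⟩
  have : Fact (1 ≤ r) := ⟨hr⟩
  have : Fact (1 ≤ p) := ⟨hr.trans (ENNReal.HolderTriple.le p q r)⟩
  have : Fact (1 ≤ q) := ⟨hr.trans (ENNReal.HolderTriple.le q p r)⟩
  refine ⟨Paper.mulSet_lpSet_eq, 1, 1, one_pos, one_pos, fun x hx => ?_⟩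
  simp only [one_mul]
  exact ⟨Paper.lpNrm_le_mulNrm hx, Paper.mulNrm_le_lpNrm hx⟩
end

section
/- If E and F are symmetric sequence spaces and F has a Fatou norm, then for every bounded operator A: E → F given by an infinite matrix, ‖A‖_{B(E,F)} = ‖A^T‖_{B(F^×,E^×)}, where A^T is the transposed matrix. -/
open Filter Topology
open scoped ENNReal

/-!
`‖Aᵀ‖ ≤ ‖A‖` holds for every bounded matrix `A`. For `x ∈ E` and `y ∈ F^×`, every finite part of
`∑ⱼ |xⱼ (Aᵀy)ⱼ|` equals `⟨A x', y⟩` for a finitely supported, sign-adjusted truncation `x'` of `x`,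
and `⟨v, y⟩ ≤ ‖v‖_F ‖y‖_{F^×}`. The last inequality needs the supremum defining `‖y‖_{F^×}` to be
finite (an unbounded `sSup` is `0`); this is Banach–Steinhaus, once `F` is viewed as a Banach
space.

For `‖A‖ ≤ ‖Aᵀ‖`, the Fatou property approximates `‖Ax‖_F` by the norm of a truncation of `Ax`.
Hahn–Banach gives a norming functional for that truncation, which may be taken finitely supported,
hence in the unit ball of `F^×`; moving `A` across the now finite pairing bounds `‖Ax‖_F` by
`‖Aᵀ y‖_{E^×}`.
-/

namespace Paper

lemma abs_sign_le_one {α : Type*} [Ring α] [LinearOrder α] [IsStrictOrderedRing α] (a : α) :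
    |(SignType.sign a : α)| ≤ 1 := by
  cases SignType.sign a <;> simp

lemma abs_single_apply_le {ι α : Type*} [DecidableEq ι] [AddCommGroup α] [LinearOrder α]
    [IsOrderedAddMonoid α] (x : ι → α) (j k : ι) : |(Pi.single j (x j) : ι → α) k| ≤ |x k| := by
  rcases eq_or_ne k j with rfl | hkj
  · simp
  · simp [hkj]

def truncate (n : ℕ) (x : ℕ → ℝ) : ℕ → ℝ := fun i => if i < n then x i else 0

lemma truncate_eq_sum (n : ℕ) (x : ℕ → ℝ) :
    truncate n x = ∑ i ∈ Finset.range n, x i • Pi.single i 1 := by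
  ext k
  simp [truncate, Finset.sum_apply, Pi.single_apply]

section Suprema

variable {A : ℕ → ℕ → ℝ} {Ec : Set (ℕ → ℝ)} {eN fN : (ℕ → ℝ) → ℝ} {x y : ℕ → ℝ} {M : ℝ}

lemma kDualNrm_le (hne : ∃ x ∈ Ec, eN x ≤ 1)
    (h : ∀ x ∈ Ec, eN x ≤ 1 → ∑' n, |x n * y n| ≤ M) : kDualNrm Ec eN y ≤ M := by
  obtain ⟨x₀, hx₀, hx₀1⟩ := hne
  exact csSup_le ⟨_, x₀, hx₀, hx₀1, rfl⟩ <| by rintro _ ⟨x, hx, hx1, rfl⟩; exact h x hx hx1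

lemma le_kDualNrm (h : ∀ x ∈ Ec, eN x ≤ 1 → ∑' n, |x n * y n| ≤ M) (hx : x ∈ Ec)
    (hx1 : eN x ≤ 1) : ∑' n, |x n * y n| ≤ kDualNrm Ec eN y :=
  le_csSup ⟨M, by rintro _ ⟨x, hx, hx1, rfl⟩; exact h x hx hx1⟩ ⟨x, hx, hx1, rfl⟩

lemma opNrm_le (hne : ∃ x ∈ Ec, eN x ≤ 1)
    (h : ∀ x ∈ Ec, eN x ≤ 1 → fN (matApply A x) ≤ M) : opNrm A Ec eN fN ≤ M := by
  obtain ⟨x₀, hx₀, hx₀1⟩ := hne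
  exact csSup_le ⟨_, x₀, hx₀, hx₀1, rfl⟩ <| by rintro _ ⟨x, hx, hx1, rfl⟩; exact h x hx hx1

lemma le_opNrm (h : ∀ x ∈ Ec, eN x ≤ 1 → fN (matApply A x) ≤ M) (hx : x ∈ Ec)
    (hx1 : eN x ≤ 1) : fN (matApply A x) ≤ opNrm A Ec eN fN :=
  le_csSup ⟨M, by rintro _ ⟨x, hx, hx1, rfl⟩; exact h x hx hx1⟩ ⟨x, hx, hx1, rfl⟩

end Suprema

lemma mem_kDual_of_eq_zero {Ec : Set (ℕ → ℝ)} {y : ℕ → ℝ} {n : ℕ}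
    (hy : ∀ i, n ≤ i → y i = 0) : y ∈ kDual Ec := by
  have hy' : ∀ i ∉ Finset.range n, y i = 0 := fun i hi => hy i (by simpa using hi)
  refine ⟨⟨∑ i ∈ Finset.range n, |y i|, ?_⟩, fun x _ => ?_⟩
  · rintro _ ⟨i, rfl⟩
    by_cases hi : i ∈ Finset.range n
    · exact Finset.single_le_sum (f := fun i => |y i|) (fun _ _ => abs_nonneg _) hi
    · simpa [hy' i hi] using Finset.sum_nonneg fun i _ => abs_nonneg (y i)
  · exact summable_of_ne_finset_zero (s := Finset.range n) fun i hi => by simp [hy' i hi]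

lemma matApply_single (A : ℕ → ℕ → ℝ) (j : ℕ) (c : ℝ) :
    matApply A (Pi.single j c) = fun i => A i j * c := by
  funext i
  simp [matApply, Pi.single_apply, mul_ite]

lemma sum_matApply_mul_eq_tsum (B : ℕ → ℕ → ℝ) {u v : ℕ → ℝ} {s : Finset ℕ}
    (hu : ∀ j ∉ s, u j = 0) (hsum : ∀ j ∈ s, Summable fun i => B j i * v i * u j) :
    ∑ j ∈ s, matApply B v j * u j = ∑' i, v i * matApply (transpose B) u i := by
  have hT : ∀ i, matApply (transpose B) u i = ∑ j ∈ s, B j i * u j := fun i =>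
    tsum_eq_sum fun j hj => by simp [hu j hj]
  calc ∑ j ∈ s, matApply B v j * u j = ∑ j ∈ s, ∑' i, B j i * v i * u j :=
        Finset.sum_congr rfl fun j _ => tsum_mul_right.symm
    _ = ∑' i, ∑ j ∈ s, B j i * v i * u j := (Summable.tsum_finsetSum hsum).symm
    _ = ∑' i, v i * matApply (transpose B) u i := tsum_congr fun i => by
        rw [hT, Finset.mul_sum]
        exact Finset.sum_congr rfl fun j _ => by ring

namespace SymmSeqSpace

noncomputable section

variable (E : SymmSeqSpace)

lemma nrm_zero : E.nrm 0 = 0 := by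
  simpa using E.nrm_smul 0 0

variable {E} {x y z : ℕ → ℝ} {n : ℕ}

lemma nrm_le_of_abs_le (hy : y ∈ E.carrier) (h : ∀ n, |x n| ≤ |y n|) : E.nrm x ≤ E.nrm y :=
  (E.solid x y h hy).2

lemma mem_of_abs_le (hy : y ∈ E.carrier) (h : ∀ n, |x n| ≤ |y n|) : x ∈ E.carrier :=
  (E.solid x y h hy).1

lemma nrm_congr_abs (hy : y ∈ E.carrier) (h : ∀ n, |x n| = |y n|) : E.nrm x = E.nrm y :=
  le_antisymm (nrm_le_of_abs_le hy fun n => (h n).le)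
    (nrm_le_of_abs_le (mem_of_abs_le hy fun n => (h n).le) fun n => (h n).ge)

lemma single_mem_of_ne_zero (hx : x ∈ E.carrier) (hx0 : x ≠ 0) (j : ℕ) (c : ℝ) :
    Pi.single j c ∈ E.carrier ∧ E.nrm (Pi.single j c) = |c| := by
  obtain ⟨n, hn⟩ : ∃ n, x n ≠ 0 := Function.ne_iff.1 hx0
  have hsingle_n : Pi.single n (1 : ℝ) ∈ E.carrier := by
    have h := E.smul_mem (x n)⁻¹ _ (mem_of_abs_le hx (abs_single_apply_le x n))
    rwa [← Pi.single_smul, smul_eq_mul, inv_mul_cancel₀ hn] at h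
  have hswap : ∀ i k : ℕ, Pi.single i (1 : ℝ) ∘ Equiv.swap i k = Pi.single k 1 := by
    intro i k
    rw [Pi.single_comp_equiv, Equiv.symm_swap, Equiv.swap_apply_left]
  have hsingle_0 : Pi.single 0 (1 : ℝ) ∈ E.carrier := by
    simpa [hswap] using (E.symm (Equiv.swap n 0) _ hsingle_n).1
  have hunit : E.nrm (Pi.single 0 (1 : ℝ)) = 1 := by
    convert E.nrm_unit using 2
    ext k
    simp [Pi.single_apply]
  obtain ⟨hmem, hnrm⟩ := E.symm (Equiv.swap 0 j) _ hsingle_0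
  rw [hswap] at hmem hnrm
  have hc : Pi.single j c = c • Pi.single j (1 : ℝ) := by
    rw [← Pi.single_smul, smul_eq_mul, mul_one]
  rw [hc, E.nrm_smul, hnrm, hunit, mul_one]
  exact ⟨E.smul_mem c _ hmem, rfl⟩

lemma abs_apply_le_nrm (hx : x ∈ E.carrier) (m : ℕ) : |x m| ≤ E.nrm x := by
  rcases eq_or_ne x 0 with rfl | hx0
  · simp [nrm_zero]
  rw [← (single_mem_of_ne_zero hx hx0 m (x m)).2]
  exact nrm_le_of_abs_le hx (abs_single_apply_le x m)

lemma truncate_mem (hx : x ∈ E.carrier) (n : ℕ) : truncate n x ∈ E.carrier :=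
  mem_of_abs_le hx fun i => by unfold truncate; split_ifs <;> simp

lemma nrm_truncate_le (hx : x ∈ E.carrier) (n : ℕ) : E.nrm (truncate n x) ≤ E.nrm x :=
  nrm_le_of_abs_le hx fun i => by unfold truncate; split_ifs <;> simp

lemma exists_restrict_mul_eq_abs (hx : x ∈ E.carrier) (w : ℕ → ℝ) (s : Finset ℕ) :
    ∃ x' ∈ E.carrier, E.nrm x' ≤ E.nrm x ∧ (∀ j ∉ s, x' j = 0) ∧
      ∀ j ∈ s, x' j * w j = |x j * w j| := by
  set x' : ℕ → ℝ := fun j => if j ∈ s then SignType.sign (x j * w j) * x j else 0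
  have hle : ∀ j, |x' j| ≤ |x j| := fun j => by
    by_cases hj : j ∈ s
    · simpa [x', hj, abs_mul] using
        mul_le_mul_of_nonneg_right (abs_sign_le_one (x j * w j)) (abs_nonneg (x j))
    · simp [x', hj]
  refine ⟨x', mem_of_abs_le hx hle, nrm_le_of_abs_le hx hle, fun j hj => by simp [x', hj],
    fun j hj => ?_⟩
  simp only [x', if_pos hj, mul_assoc, sign_mul_self]

variable (E)

def toSubmodule : Submodule ℝ (ℕ → ℝ) where
  carrier := E.carrier
  add_mem' hx hy := E.add_mem _ hx _ hy
  zero_mem' := E.zero_mem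
  smul_mem' c _ hx := E.smul_mem c _ hx

/-- A type synonym, so that the norm `E.nrm` does not clash with the product topology of
`ℕ → ℝ`. -/
def Space : Type := E.toSubmodule

instance : AddCommGroup E.Space := inferInstanceAs (AddCommGroup E.toSubmodule)

instance : Module ℝ E.Space := inferInstanceAs (Module ℝ E.toSubmodule)

def toSeq : E.Space →ₗ[ℝ] ℕ → ℝ := E.toSubmodule.subtype

def ofSeq (x : ℕ → ℝ) (hx : x ∈ E.carrier) : E.Space := (⟨x, hx⟩ : E.toSubmodule)

instance : Norm E.Space := ⟨fun x => E.nrm (E.toSeq x)⟩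

variable {E}

@[simp]
lemma toSeq_ofSeq (hx : x ∈ E.carrier) : E.toSeq (E.ofSeq x hx) = x := rfl

lemma toSeq_mem (x : E.Space) : E.toSeq x ∈ E.carrier := (show E.toSubmodule from x).2

lemma toSeq_injective : Function.Injective E.toSeq := Subtype.val_injective

lemma norm_def (x : E.Space) : ‖x‖ = E.nrm (E.toSeq x) := rfl

lemma normedSpaceCore : NormedSpace.Core ℝ E.Space where
  norm_nonneg x := E.nrm_nonneg _
  norm_smul c x := by simp only [norm_def, map_smul, E.nrm_smul, Real.norm_eq_abs]
  norm_triangle x y := by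
    simpa only [norm_def, map_add] using E.nrm_add _ (toSeq_mem x) _ (toSeq_mem y)
  norm_eq_zero_iff x := by
    rw [norm_def, E.nrm_eq_zero_iff _ (toSeq_mem x), ← map_zero E.toSeq,
      toSeq_injective.eq_iff]

instance : NormedAddCommGroup E.Space := NormedAddCommGroup.ofCore normedSpaceCore

instance : NormedSpace ℝ E.Space := NormedSpace.ofCore normedSpaceCore

@[simp]
lemma norm_ofSeq (hx : x ∈ E.carrier) : ‖E.ofSeq x hx‖ = E.nrm x := rfl

instance : CompleteSpace E.Space := by
  refine Metric.complete_of_cauchySeq_tendsto fun u hu => ?_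
  rw [Metric.cauchySeq_iff] at hu
  obtain ⟨x, hx, hlim⟩ := E.complete (fun n => E.toSeq (u n)) (fun n => toSeq_mem _)
    fun ε hε => by simpa only [dist_eq_norm, norm_def, map_sub] using hu ε hε
  exact ⟨E.ofSeq x hx, tendsto_iff_norm_sub_tendsto_zero.2 <| by
    simpa only [norm_def, map_sub, toSeq_ofSeq] using hlim⟩

variable (E) in
def coord (m : ℕ) : E.Space →L[ℝ] ℝ :=
  (LinearMap.proj m ∘ₗ E.toSeq).mkContinuous 1 fun x => by
    simpa [norm_def] using abs_apply_le_nrm (toSeq_mem x) m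

@[simp]
lemma coord_apply (m : ℕ) (x : E.Space) : E.coord m x = E.toSeq x m := rfl

/-- Banach–Steinhaus, applied to the functionals `x ↦ ∑_{n ∈ t} ± x n * y n`. -/
lemma exists_tsum_abs_mul_le (hy : y ∈ kDual E.carrier) :
    ∃ C, ∀ x ∈ E.carrier, ∑' n, |x n * y n| ≤ C * E.nrm x := by
  let g : Finset ℕ × (ℕ → ℝ) → E.Space →L[ℝ] ℝ := fun p =>
    ∑ n ∈ p.1, ((SignType.sign (p.2 n) : ℝ) * y n) • E.coord n
  have hg : ∀ p x, g p x = ∑ n ∈ p.1, SignType.sign (p.2 n) * (E.toSeq x n * y n) := by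
    intro p x
    simp only [g, sum_apply, smul_apply, coord_apply, smul_eq_mul]
    exact Finset.sum_congr rfl fun n _ => by ring
  obtain ⟨C, hC⟩ := banach_steinhaus (g := g) fun x => ⟨∑' n, |E.toSeq x n * y n|, fun p => by
    rw [hg, Real.norm_eq_abs]
    calc |∑ n ∈ p.1, SignType.sign (p.2 n) * (E.toSeq x n * y n)|
        ≤ ∑ n ∈ p.1, |E.toSeq x n * y n| := by
          refine (Finset.abs_sum_le_sum_abs _ _).trans (Finset.sum_le_sum fun n _ => ?_)
          rw [abs_mul]
          exact mul_le_of_le_one_left (abs_nonneg _) (abs_sign_le_one _)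
      _ ≤ ∑' n, |E.toSeq x n * y n| :=
          Summable.sum_le_tsum _ (fun _ _ => abs_nonneg _) (hy.2 _ (toSeq_mem x))⟩
  refine ⟨C, fun x hx => (hy.2 x hx).tsum_le_of_sum_le fun t => ?_⟩
  calc ∑ n ∈ t, |x n * y n| = g (t, fun n => x n * y n) (E.ofSeq x hx) := by
        simp [hg, sign_mul_self]
    _ ≤ ‖g (t, fun n => x n * y n)‖ * ‖E.ofSeq x hx‖ :=
        (Real.le_norm_self _).trans (ContinuousLinearMap.le_opNorm _ _)
    _ ≤ C * E.nrm x := mul_le_mul_of_nonneg_right (hC _) (E.nrm_nonneg x)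

lemma tsum_abs_mul_le_kDualNrm_mul (hy : y ∈ kDual E.carrier) (hx : x ∈ E.carrier) :
    ∑' n, |x n * y n| ≤ kDualNrm E.carrier E.nrm y * E.nrm x := by
  obtain ⟨C, hC⟩ := exists_tsum_abs_mul_le hy
  rcases (E.nrm_nonneg x).eq_or_lt with h0 | hpos
  · obtain rfl := (E.nrm_eq_zero_iff x hx).1 h0.symm
    simp [nrm_zero]
  have hbound : ∀ z ∈ E.carrier, E.nrm z ≤ 1 → ∑' n, |z n * y n| ≤ |C| := fun z hz hz1 =>
    (hC z hz).trans <| (mul_le_mul_of_nonneg_right (le_abs_self C) (E.nrm_nonneg z)).trans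
      (mul_le_of_le_one_right (abs_nonneg C) hz1)
  have hnrm : E.nrm ((E.nrm x)⁻¹ • x) = 1 := by
    rw [E.nrm_smul, abs_of_pos (inv_pos.2 hpos), inv_mul_cancel₀ hpos.ne']
  have h := le_kDualNrm hbound (E.smul_mem _ x hx) hnrm.le
  have hscale : ∀ n, |((E.nrm x)⁻¹ • x) n * y n| = (E.nrm x)⁻¹ * |x n * y n| := fun n => by
    rw [Pi.smul_apply, smul_eq_mul, mul_assoc, abs_mul, abs_of_pos (inv_pos.2 hpos)]
  rw [tsum_congr hscale, tsum_mul_left] at h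
  rwa [inv_mul_le_iff₀ hpos, mul_comm] at h

lemma exists_norming_of_eq_zero {w : ℕ → ℝ} (hw : w ∈ E.carrier)
    (hwn : ∀ i, n ≤ i → w i = 0) :
    ∃ Y : ℕ → ℝ, (∀ i, n ≤ i → Y i = 0) ∧
      (∀ v ∈ E.carrier, ∑ i ∈ Finset.range n, v i * Y i ≤ E.nrm v) ∧
      ∑ i ∈ Finset.range n, w i * Y i = E.nrm w := by
  rcases eq_or_ne w 0 with rfl | hw0
  · exact ⟨0, fun _ _ => rfl, fun v _ => by simpa using E.nrm_nonneg v, by simp [nrm_zero]⟩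
  have hsingle (i : ℕ) := (single_mem_of_ne_zero hw hw0 i 1).1
  obtain ⟨g, hg1, hgw⟩ := exists_dual_vector'' ℝ (E.ofSeq w hw)
  set Y : ℕ → ℝ := fun i => if i < n then g (E.ofSeq _ (hsingle i)) else 0
  have hYn : ∀ i, n ≤ i → Y i = 0 := fun i hi => if_neg hi.not_gt
  have hpair : ∀ v (hv : v ∈ E.carrier),
      ∑ i ∈ Finset.range n, v i * Y i = g (E.ofSeq _ (truncate_mem hv n)) := by
    intro v hv
    have hsum : E.ofSeq _ (truncate_mem hv n) =
        ∑ i ∈ Finset.range n, v i • E.ofSeq _ (hsingle i) :=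
      toSeq_injective (by simp [map_sum, truncate_eq_sum])
    rw [hsum, map_sum]
    exact Finset.sum_congr rfl fun i hi => by simp [Y, Finset.mem_range.1 hi]
  refine ⟨Y, hYn, fun v hv => ?_, ?_⟩
  · rw [hpair v hv]
    calc g (E.ofSeq _ (truncate_mem hv n))
        ≤ ‖g‖ * E.nrm (truncate n v) :=
          (Real.le_norm_self _).trans (ContinuousLinearMap.le_opNorm _ _)
      _ ≤ 1 * E.nrm v :=
          mul_le_mul hg1 (nrm_truncate_le hv n) (E.nrm_nonneg _) zero_le_one
      _ = E.nrm v := one_mul _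
  · have htw : truncate n w = w := funext fun i => by
      unfold truncate
      split_ifs with hi
      · rfl
      · exact (hwn i (not_lt.1 hi)).symm
    rw [hpair w hw]
    simpa [htw] using hgw

lemma exists_lt_nrm_truncate (hE : HasFatouNorm E) (hz : z ∈ E.carrier) {ε : ℝ} (hε : 0 < ε) :
    ∃ n, E.nrm z - ε < E.nrm (truncate n z) := by
  have habs : (fun m => |z m|) ∈ E.carrier := mem_of_abs_le hz fun m => by simp
  have hlim := hE _ habs (fun n => truncate n fun m => |z m|) (fun n => truncate_mem habs n)
    (fun n m => by unfold truncate; split_ifs <;> simp)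
    (fun n m => by unfold truncate; split_ifs <;> first | (exfalso; omega) | simp)
    (fun m => tendsto_atTop_of_eventually_const (i₀ := m + 1) fun n hn => by
      simp [truncate, show m < n by omega])
  rw [nrm_congr_abs hz fun m => abs_abs (z m)] at hlim
  obtain ⟨n, hn⟩ := (hlim.eventually (eventually_gt_nhds (sub_lt_self _ hε))).exists
  exact ⟨n, hn.trans_eq <| nrm_congr_abs (truncate_mem hz n) fun m => by
    unfold truncate; split_ifs <;> simp⟩

lemma kDualNrm_le_one_of_sum_le {Y : ℕ → ℝ} (hY : ∀ i, n ≤ i → Y i = 0)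
    (h : ∀ v ∈ E.carrier, ∑ i ∈ Finset.range n, v i * Y i ≤ E.nrm v) :
    kDualNrm E.carrier E.nrm Y ≤ 1 := by
  refine kDualNrm_le ⟨0, E.zero_mem, by simp [nrm_zero]⟩ fun x hx hx1 => ?_
  obtain ⟨x', hx', hx'x, -, hx'Y⟩ := exists_restrict_mul_eq_abs hx Y (Finset.range n)
  calc ∑' i, |x i * Y i| = ∑ i ∈ Finset.range n, |x i * Y i| :=
        tsum_eq_sum fun i hi => by simp [hY i (by simpa using hi)]
    _ = ∑ i ∈ Finset.range n, x' i * Y i := (Finset.sum_congr rfl hx'Y).symm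
    _ ≤ E.nrm x' := h x' hx'
    _ ≤ 1 := hx'x.trans hx1

lemma exists_finsupp_norming (hE : HasFatouNorm E) (hz : z ∈ E.carrier) {ε : ℝ} (hε : 0 < ε) :
    ∃ (Y : ℕ → ℝ) (n : ℕ), (∀ i, n ≤ i → Y i = 0) ∧ Y ∈ kDual E.carrier ∧
      kDualNrm E.carrier E.nrm Y ≤ 1 ∧ E.nrm z ≤ ∑ i ∈ Finset.range n, z i * Y i + ε := by
  obtain ⟨n, hn⟩ := exists_lt_nrm_truncate hE hz hε
  obtain ⟨Y, hYn, hYle, hYw⟩ := exists_norming_of_eq_zero (truncate_mem hz n)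
    fun i hi => if_neg hi.not_gt
  refine ⟨Y, n, hYn, mem_kDual_of_eq_zero hYn, kDualNrm_le_one_of_sum_le hYn hYle, ?_⟩
  have htrunc : ∑ i ∈ Finset.range n, truncate n z i * Y i = ∑ i ∈ Finset.range n, z i * Y i :=
    Finset.sum_congr rfl fun i hi => by simp [truncate, Finset.mem_range.1 hi]
  linarith

end

end SymmSeqSpace

section Operator

variable {A : ℕ → ℕ → ℝ} {E F : SymmSeqSpace} {x y : ℕ → ℝ}

lemma nrm_matApply_le_opNrm (hA : IsBddOp A E.carrier F.carrier E.nrm F.nrm)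
    (hx : x ∈ E.carrier) (hx1 : E.nrm x ≤ 1) :
    F.nrm (matApply A x) ≤ opNrm A E.carrier E.nrm F.nrm := by
  obtain ⟨-, C, hC⟩ := hA
  refine le_opNrm (M := |C|) (fun x hx hx1 => (hC x hx).trans ?_) hx hx1
  exact (mul_le_mul_of_nonneg_right (le_abs_self C) (E.nrm_nonneg x)).trans
    (mul_le_of_le_one_right (abs_nonneg C) hx1)

section Transpose

variable (hA : IsBddOp A E.carrier F.carrier E.nrm F.nrm) (hy : y ∈ kDual F.carrier)
  (hy1 : kDualNrm F.carrier F.nrm y ≤ 1)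
include hA hy hy1

lemma sum_abs_mul_matApply_transpose_le (hx : x ∈ E.carrier) (hx1 : E.nrm x ≤ 1)
    (s : Finset ℕ) :
    ∑ j ∈ s, |x j * matApply (transpose A) y j| ≤ opNrm A E.carrier E.nrm F.nrm := by
  set w := matApply (transpose A) y
  obtain ⟨x', hx', hx'x, hx's, hx'w⟩ := SymmSeqSpace.exists_restrict_mul_eq_abs hx w s
  have hAx' := (hA.1 x' hx').2
  have hcol : ∀ j ∈ s, Summable fun i => transpose A j i * y i * x' j := fun j _ => by
    have h := hy.2 _ (hA.1 _ (SymmSeqSpace.mem_of_abs_le hx' (abs_single_apply_le x' j))).2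
    rw [matApply_single] at h
    exact h.of_abs.congr fun i => by simp only [transpose]; ring
  have hsum := hy.2 _ hAx'
  calc ∑ j ∈ s, |x j * w j| = ∑ j ∈ s, w j * x' j :=
        Finset.sum_congr rfl fun j hj => by rw [← hx'w j hj, mul_comm]
    _ = ∑' i, y i * matApply A x' i := sum_matApply_mul_eq_tsum (transpose A) hx's hcol
    _ ≤ ∑' i, |matApply A x' i * y i| :=
        Summable.tsum_le_tsum (fun i => mul_comm (y i) _ ▸ le_abs_self _)
          (hsum.of_abs.congr fun i => mul_comm _ _) hsum
    _ ≤ kDualNrm F.carrier F.nrm y * F.nrm (matApply A x') :=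
        SymmSeqSpace.tsum_abs_mul_le_kDualNrm_mul hy hAx'
    _ ≤ 1 * opNrm A E.carrier E.nrm F.nrm :=
        mul_le_mul hy1 (nrm_matApply_le_opNrm hA hx' (hx'x.trans hx1)) (F.nrm_nonneg _)
          zero_le_one
    _ = opNrm A E.carrier E.nrm F.nrm := one_mul _

lemma summable_abs_mul_matApply_transpose (hx : x ∈ E.carrier) (hx1 : E.nrm x ≤ 1) :
    Summable fun j => |x j * matApply (transpose A) y j| :=
  summable_of_sum_le (fun _ => abs_nonneg _)
    (sum_abs_mul_matApply_transpose_le hA hy hy1 hx hx1)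

lemma tsum_abs_mul_matApply_transpose_le (hx : x ∈ E.carrier) (hx1 : E.nrm x ≤ 1) :
    ∑' j, |x j * matApply (transpose A) y j| ≤ opNrm A E.carrier E.nrm F.nrm :=
  (summable_abs_mul_matApply_transpose hA hy hy1 hx hx1).tsum_le_of_sum_le
    (sum_abs_mul_matApply_transpose_le hA hy hy1 hx hx1)

lemma kDualNrm_matApply_transpose_le :
    kDualNrm E.carrier E.nrm (matApply (transpose A) y) ≤ opNrm A E.carrier E.nrm F.nrm :=
  kDualNrm_le ⟨0, E.zero_mem, by simp [SymmSeqSpace.nrm_zero]⟩ fun _ hx hx1 =>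
    tsum_abs_mul_matApply_transpose_le hA hy hy1 hx hx1

end Transpose

lemma opNrm_transpose_le (hA : IsBddOp A E.carrier F.carrier E.nrm F.nrm) :
    opNrm (transpose A) (kDual F.carrier) (kDualNrm F.carrier F.nrm) (kDualNrm E.carrier E.nrm)
      ≤ opNrm A E.carrier E.nrm F.nrm := by
  have h0 : kDualNrm F.carrier F.nrm 0 ≤ 1 :=
    kDualNrm_le ⟨0, F.zero_mem, by simp [SymmSeqSpace.nrm_zero]⟩ fun _ _ _ => by simp
  exact opNrm_le ⟨0, mem_kDual_of_eq_zero (n := 0) fun _ _ => rfl, h0⟩ fun _ hy hy1 =>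
    kDualNrm_matApply_transpose_le hA hy hy1

lemma opNrm_le_opNrm_transpose (hF : HasFatouNorm F)
    (hA : IsBddOp A E.carrier F.carrier E.nrm F.nrm) :
    opNrm A E.carrier E.nrm F.nrm ≤
      opNrm (transpose A) (kDual F.carrier) (kDualNrm F.carrier F.nrm)
        (kDualNrm E.carrier E.nrm) := by
  refine opNrm_le ⟨0, E.zero_mem, by simp [SymmSeqSpace.nrm_zero]⟩ fun x hx hx1 =>
    le_of_forall_pos_le_add fun ε hε => ?_
  obtain ⟨Y, n, hYn, hY, hY1, hnorming⟩ :=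
    SymmSeqSpace.exists_finsupp_norming hF (hA.1 x hx).2 hε
  have hsum := summable_abs_mul_matApply_transpose hA hY hY1 hx hx1
  calc F.nrm (matApply A x) ≤ ∑ i ∈ Finset.range n, matApply A x i * Y i + ε := hnorming
    _ = ∑' j, x j * matApply (transpose A) Y j + ε := by
        rw [sum_matApply_mul_eq_tsum A (fun i hi => hYn i (by simpa using hi))
          fun i _ => ((hA.1 x hx).1 i).mul_right (Y i)]
    _ ≤ ∑' j, |x j * matApply (transpose A) Y j| + ε :=
        add_le_add_left (Summable.tsum_le_tsum (fun j => le_abs_self _) hsum.of_abs hsum) ε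
    _ ≤ kDualNrm E.carrier E.nrm (matApply (transpose A) Y) + ε :=
        add_le_add_left (le_kDualNrm (fun _ hx hx1 =>
          tsum_abs_mul_matApply_transpose_le hA hY hY1 hx hx1) hx hx1) ε
    _ ≤ opNrm (transpose A) (kDual F.carrier) (kDualNrm F.carrier F.nrm)
          (kDualNrm E.carrier E.nrm) + ε :=
        add_le_add_left (le_opNrm (fun _ hy hy1 => kDualNrm_matApply_transpose_le hA hy hy1)
          hY hY1) ε

end Operator

end Paper

/-- If `E, F` are symmetric sequence spaces, `F` has a Fatou norm and the
matrix `A` is a bounded operator from `E` to `F`, then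
`‖A‖_{B(E,F)} = ‖Aᵀ‖_{B(F^×, E^×)}`. -/
theorem stmt11 (E F : Paper.SymmSeqSpace) (hF : Paper.HasFatouNorm F)
    (A : ℕ → ℕ → ℝ)
    (hA : Paper.IsBddOp A E.carrier F.carrier E.nrm F.nrm) :
    Paper.opNrm A E.carrier E.nrm F.nrm =
      Paper.opNrm (Paper.transpose A) (Paper.kDual F.carrier)
        (Paper.kDualNrm F.carrier F.nrm) (Paper.kDualNrm E.carrier E.nrm) :=
  le_antisymm (Paper.opNrm_le_opNrm_transpose hF hA) (Paper.opNrm_transpose_le hA)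
end
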